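/- Let P and Q be probability distributions on finite sets, neither of which is a uniform distribution, with H(P)/V(P) > H(Q)/V(Q), let b ∈ ℝ, and let α be the unique real solution of N_P(x)/N_{P,Q,b}(x) = G_P(x)/G_{P,Q,b}(x). Define A_1(x) = (G_P(α)/G_{P,Q,b}(α))·G_{P,Q,b}(x) for x ≤ α and A_1(x) = G_P(x) for x ≥ α. Then A_1 is continuously differentiable on ℝ and √(G_P(α)·G_{P,Q,b}(α)) + I_{P,Q,b}(∞) − I_{P,Q,b}(α) = ∫_ℝ √(A_1'(x)·N_{P,Q,b}(x)) dx. -/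

import Mathlib

open MeasureTheory Filter

namespace RNG

variable {α β : Type*}

/-- `P` is a probability distribution on the finite set `α`. -/
def IsProb [Fintype α] (P : α → ℝ) : Prop :=
  (∀ x, 0 ≤ P x) ∧ ∑ x, P x = 1

open Classical in
/-- Pushforward distribution `W(P)(y) = ∑_{x : W x = y} P x`. -/
noncomputable def push [Fintype α] (W : α → β) (P : α → ℝ) : β → ℝ :=
  fun y => ∑ x, if W x = y then P x else 0

/-- Fidelity (Bhattacharyya coefficient) between distributions on the same finite set. -/
noncomputable def fid [Fintype β] (R S : β → ℝ) : ℝ :=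
  ∑ y, Real.sqrt (R y * S y)

/-- Sum of the `l` largest values of `P`, i.e. the `l`-th partial sum of the
decreasing rearrangement of `P` (padded with zeros). -/
noncomputable def topSum [Fintype α] (P : α → ℝ) (l : ℕ) : ℝ :=
  sSup {s : ℝ | ∃ A : Finset α, A.card ≤ l ∧ s = ∑ x ∈ A, P x}

/-- Majorization `P ≺ P'` (the distributions may live on different finite sets). -/
def Maj [Fintype α] [Fintype β] (P : α → ℝ) (P' : β → ℝ) : Prop :=
  ∀ l : ℕ, topSum P l ≤ topSum P' l

/-- Maximal fidelity under deterministic transformations,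
`F^D(P → Q) = max {F(W(P), Q) | W : α → β}`. -/
noncomputable def FD [Fintype α] [Fintype β] (P : α → ℝ) (Q : β → ℝ) : ℝ :=
  sSup {r : ℝ | ∃ W : α → β, r = fid (push W P) Q}

/-- Maximal fidelity under the majorization condition,
`F^M(P → Q) = max {F(P', Q) | P ≺ P', P'` a distribution on the target set`}`. -/
noncomputable def FM [Fintype α] [Fintype β] (P : α → ℝ) (Q : β → ℝ) : ℝ :=
  sSup {r : ℝ | ∃ P' : β → ℝ, IsProb P' ∧ Maj P P' ∧ r = fid P' Q}

/-- Shannon entropy (natural logarithm). -/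
noncomputable def H [Fintype α] (P : α → ℝ) : ℝ := ∑ x, -(P x * Real.log (P x))

/-- Varentropy `V(P)` (natural logarithm). -/
noncomputable def V [Fintype α] (P : α → ℝ) : ℝ :=
  ∑ x, P x * (-Real.log (P x) - H P) ^ 2

/-- Shannon entropy, base-2 logarithm. -/
noncomputable def H2 [Fintype α] (P : α → ℝ) : ℝ := ∑ x, -(P x * Real.logb 2 (P x))

/-- Varentropy, base-2 logarithm. -/
noncomputable def V2 [Fintype α] (P : α → ℝ) : ℝ :=
  ∑ x, P x * (-Real.logb 2 (P x) - H2 P) ^ 2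

/-- The `n`-fold i.i.d. product distribution `P^n`. -/
noncomputable def iid [Fintype α] (P : α → ℝ) (n : ℕ) : (Fin n → α) → ℝ :=
  fun f => ∏ i, P (f i)

/-- The uniform distribution on a two-element set. -/
noncomputable def U2 : Fin 2 → ℝ := fun _ => 1 / 2

/-- Density of the normal distribution `N(m, v)`. -/
noncomputable def normalPDF (m v t : ℝ) : ℝ :=
  (Real.sqrt (2 * Real.pi * v))⁻¹ * Real.exp (-(t - m) ^ 2 / (2 * v))

/-- Standard normal cumulative distribution function `G`. -/
noncomputable def stdG (x : ℝ) : ℝ := ∫ t in Set.Iic x, normalPDF 0 1 t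

/-- Density `N_P` of `N(0, V(P))`. -/
noncomputable def NP [Fintype α] (P : α → ℝ) (x : ℝ) : ℝ := normalPDF 0 (V P) x

/-- Density `N_{P,Q,b}` of `N(H(Q)b, (H(P)/H(Q))·V(Q))`. -/
noncomputable def NPQ [Fintype α] [Fintype β] (P : α → ℝ) (Q : β → ℝ) (b x : ℝ) : ℝ :=
  normalPDF (H Q * b) (H P / H Q * V Q) x

/-- Cdf `G_P(x) = G(x/√V(P))`. -/
noncomputable def GP [Fintype α] (P : α → ℝ) (x : ℝ) : ℝ := stdG (x / Real.sqrt (V P))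

/-- Cdf `G_{P,Q,b}(x) = G(√(H(Q)/(H(P)V(Q)))·(x − H(Q)b))`. -/
noncomputable def GPQ [Fintype α] [Fintype β] (P : α → ℝ) (Q : β → ℝ) (b x : ℝ) : ℝ :=
  stdG (Real.sqrt (H Q / (H P * V Q)) * (x - H Q * b))

/-- `I_{P,Q,b}(x) = ∫_{−∞}^x √(N_P(t) N_{P,Q,b}(t)) dt`. -/
noncomputable def IPQ [Fintype α] [Fintype β] (P : α → ℝ) (Q : β → ℝ) (b x : ℝ) : ℝ :=
  ∫ t in Set.Iic x, Real.sqrt (NP P t * NPQ P Q b t)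

/-- `I_{P,Q,b}(∞) = ∫_ℝ √(N_P(t) N_{P,Q,b}(t)) dt`. -/
noncomputable def IPQinf [Fintype α] [Fintype β] (P : α → ℝ) (Q : β → ℝ) (b : ℝ) : ℝ :=
  ∫ t : ℝ, Real.sqrt (NP P t * NPQ P Q b t)

/-- `L^D_n(P,Q|ν)`: the maximal `L` with `F^D(P^n → Q^L) ≥ ν`. -/
noncomputable def LD [Fintype α] [Fintype β] (P : α → ℝ) (Q : β → ℝ) (ν : ℝ) (n : ℕ) : ℕ :=
  sSup {L : ℕ | ν ≤ FD (iid P n) (iid Q L)}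

/-- The optimal second order rate `R^D_2(P,Q|ν)`. -/
noncomputable def RD2 [Fintype α] [Fintype β] (P : α → ℝ) (Q : β → ℝ) (ν : ℝ) : ℝ :=
  sSup {b : ℝ | ∃ c : ℝ, ν ≤ c ∧
    Tendsto (fun n : ℕ =>
      FD (iid P n) (iid Q (⌊H P / H Q * n + b * Real.sqrt n⌋₊))) atTop (nhds c)}

/-! The defining equation of `α` says exactly that `c · N_{P,Q,b}(α) = N_P(α)` for
`c = G_P(α)/G_{P,Q,b}(α)`, while `c · G_{P,Q,b}(α) = G_P(α)` holds by the choice of `c`. So `A_1`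
glues two smooth functions whose values and derivatives agree at `α`: it is `C¹` with
`A_1' = c · N_{P,Q,b}` on `(-∞, α]` and `A_1' = N_P` on `(α, ∞)`. The integral of
`√(A_1' · N_{P,Q,b})` then splits at `α` into `√c · G_{P,Q,b}(α) = √(G_P(α) G_{P,Q,b}(α))` and
`I_{P,Q,b}(∞) - I_{P,Q,b}(α)`. -/

open Set

section Gaussian

open ProbabilityTheory

lemma normalPDF_eq_gaussianPDFReal (m : ℝ) {v : ℝ} (hv : 0 ≤ v) :
    normalPDF m v = gaussianPDFReal m v.toNNReal := by
  rw [gaussianPDFReal_def, Real.coe_toNNReal v hv]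
  rfl

lemma normalPDF_nonneg (m v x : ℝ) : 0 ≤ normalPDF m v x := by
  unfold normalPDF
  positivity

lemma normalPDF_pos (m : ℝ) {v : ℝ} (hv : 0 < v) (x : ℝ) : 0 < normalPDF m v x := by
  rw [normalPDF_eq_gaussianPDFReal m hv.le]
  exact gaussianPDFReal_pos _ _ _ (Real.toNNReal_pos.2 hv).ne'

lemma continuous_normalPDF (m v : ℝ) : Continuous (normalPDF m v) := by
  unfold normalPDF
  fun_prop

lemma integrable_normalPDF (m : ℝ) {v : ℝ} (hv : 0 ≤ v) : Integrable (normalPDF m v) := by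
  rw [normalPDF_eq_gaussianPDFReal m hv]
  exact integrable_gaussianPDFReal m _

lemma gaussianReal_map_affine (m : ℝ) {v : ℝ} (hv : 0 ≤ v) :
    (gaussianReal 0 1).map (fun s => √v * s + m) = gaussianReal m v.toNNReal := by
  have hcomp : (fun s => √v * s + m) = (· + m) ∘ (√v * ·) := rfl
  have hvar : NNReal.mk (√v ^ 2) (sq_nonneg _) * 1 = v.toNNReal := by
    ext
    simp only [NNReal.coe_mk, mul_one, Real.sq_sqrt hv, Real.coe_toNNReal v hv]
  rw [hcomp, ← Measure.map_map (by fun_prop) (by fun_prop), gaussianReal_map_const_mul, hvar,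
    gaussianReal_map_add_const, mul_zero, zero_add]

lemma integral_Iic_normalPDF (m : ℝ) {v : ℝ} (hv : 0 < v) (x : ℝ) :
    ∫ t in Iic x, normalPDF m v t = stdG ((x - m) / √v) := by
  have hsqrt : 0 < √v := Real.sqrt_pos.2 hv
  have hpre : (fun s => √v * s + m) ⁻¹' Iic x = Iic ((x - m) / √v) := by
    ext s
    rw [mem_preimage, mem_Iic, mem_Iic, le_div_iff₀ hsqrt]
    constructor <;> intro h <;> linarith
  have hmeas : gaussianReal m v.toNNReal (Iic x) = gaussianReal 0 1 (Iic ((x - m) / √v)) := by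
    rw [← gaussianReal_map_affine m hv.le, Measure.map_apply (by fun_prop) measurableSet_Iic, hpre]
  rw [gaussianReal_apply_eq_integral _ (Real.toNNReal_pos.2 hv).ne',
    gaussianReal_apply_eq_integral _ one_ne_zero,
    ENNReal.ofReal_eq_ofReal_iff (integral_nonneg (gaussianPDFReal_nonneg _ _))
      (integral_nonneg (gaussianPDFReal_nonneg _ _))] at hmeas
  rwa [normalPDF_eq_gaussianPDFReal m hv.le, stdG, normalPDF_eq_gaussianPDFReal 0 zero_le_one,
    Real.toNNReal_one]

lemma stdG_pos (x : ℝ) : 0 < stdG x := by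
  have hsupp : Function.support (normalPDF 0 1) = univ :=
    Function.support_eq_univ fun t => (normalPDF_pos 0 one_pos t).ne'
  rw [stdG, setIntegral_pos_iff_support_of_nonneg_ae
    (ae_of_all _ (normalPDF_nonneg 0 1)) (integrable_normalPDF 0 zero_le_one).integrableOn,
    hsupp, univ_inter, Real.volume_Iic]
  exact ENNReal.zero_lt_top

lemma hasDerivAt_stdG (x : ℝ) : HasDerivAt stdG (normalPDF 0 1 x) x := by
  have hint := integrable_normalPDF 0 zero_le_one
  have hstdG : stdG = fun y => stdG 0 + ∫ t in (0 : ℝ)..y, normalPDF 0 1 t := by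
    funext y
    rw [← intervalIntegral.integral_Iic_sub_Iic hint.integrableOn hint.integrableOn, stdG, stdG]
    ring
  rw [hstdG]
  exact (intervalIntegral.integral_hasDerivAt_right hint.intervalIntegrable
    hint.aestronglyMeasurable.stronglyMeasurableAtFilter
    (continuous_normalPDF 0 1).continuousAt).const_add _

lemma hasDerivAt_stdG_div_sqrt (m : ℝ) {v : ℝ} (hv : 0 < v) (x : ℝ) :
    HasDerivAt (fun t => stdG ((t - m) / √v)) (normalPDF m v x) x := by
  have hinner : HasDerivAt (fun t => (t - m) / √v) (1 / √v) x := by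
    simpa using ((hasDerivAt_id x).sub_const m).div_const √v
  refine ((hasDerivAt_stdG _).comp x hinner).congr_deriv ?_
  unfold normalPDF
  rw [Real.sqrt_mul (by positivity) v, sub_zero, div_pow, Real.sq_sqrt hv.le, mul_inv]
  ring_nf

end Gaussian

lemma IsProb.H_pos {γ : Type*} [Fintype γ] {P : γ → ℝ} (hP : IsProb P) (hV : 0 < V P) :
    0 < H P := by
  have hle_one : ∀ x, P x ≤ 1 := fun x =>
    hP.2 ▸ Finset.single_le_sum (fun i _ => hP.1 i) (Finset.mem_univ x)
  have hterm : ∀ x, 0 ≤ -(P x * Real.log (P x)) := fun x => by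
    simpa [Real.negMulLog] using Real.negMulLog_nonneg (hP.1 x) (hle_one x)
  refine (Finset.sum_nonneg fun x _ => hterm x).lt_of_ne fun hH => hV.ne' ?_
  have hzero := (Finset.sum_eq_zero_iff_of_nonneg fun x _ => hterm x).1 hH.symm
  rw [V, H, ← hH]
  refine Finset.sum_eq_zero fun x hx => ?_
  -- `P log P = 0` forces `P (log P)² = (P log P) · log P = 0`.
  have hx0 : P x * Real.log (P x) = 0 := neg_eq_zero.1 (hzero x hx)
  linear_combination Real.log (P x) * hx0

section Gluing

variable {f g f' g' : ℝ → ℝ} {a : ℝ}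

theorem hasDerivAt_ite_le (hf : ∀ y ≤ a, HasDerivAt f (f' y) y)
    (hg : ∀ y, a ≤ y → HasDerivAt g (g' y) y) (hfg : f a = g a) (hfg' : f' a = g' a) (x : ℝ) :
    HasDerivAt (fun y => if y ≤ a then f y else g y) (if x ≤ a then f' x else g' x) x := by
  rcases lt_trichotomy x a with hx | rfl | hx
  · rw [if_pos hx.le]
    exact (hf x hx.le).congr_of_eventuallyEq <|
      eventually_of_mem (Iio_mem_nhds hx) fun y hy => if_pos (le_of_lt hy)
  · rw [if_pos le_rfl]
    have hleft : HasDerivWithinAt (fun y => if y ≤ x then f y else g y) (f' x) (Iic x) x :=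
      (hf x le_rfl).hasDerivWithinAt.congr (fun y hy => if_pos hy) (if_pos le_rfl)
    have hright : HasDerivWithinAt (fun y => if y ≤ x then f y else g y) (f' x) (Ici x) x := by
      rw [hfg']
      refine (hg x le_rfl).hasDerivWithinAt.congr (fun y hy => ?_) (by rw [if_pos le_rfl, hfg])
      rcases (mem_Ici.1 hy).eq_or_lt with rfl | hy
      · rw [if_pos le_rfl, hfg]
      · exact if_neg (not_le.2 hy)
    simpa [Iic_union_Ici] using hleft.union hright
  · rw [if_neg (not_le.2 hx)]
    exact (hg x hx.le).congr_of_eventuallyEq <|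
      eventually_of_mem (Ioi_mem_nhds hx) fun y hy => if_neg (not_le.2 hy)

theorem contDiff_one_ite_le (hf : ∀ y ≤ a, HasDerivAt f (f' y) y)
    (hg : ∀ y, a ≤ y → HasDerivAt g (g' y) y) (hf'c : Continuous f') (hg'c : Continuous g')
    (hfg : f a = g a) (hfg' : f' a = g' a) :
    ContDiff ℝ 1 (fun y => if y ≤ a then f y else g y) := by
  have hderiv := hasDerivAt_ite_le hf hg hfg hfg'
  refine contDiff_one_iff_deriv.2 ⟨fun x => (hderiv x).differentiableAt, ?_⟩
  rw [funext fun x => (hderiv x).deriv]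
  exact hf'c.if_le hg'c continuous_id continuous_const fun x hx => hx ▸ hfg'

end Gluing

lemma integrable_sqrt_mul {M N : ℝ → ℝ} (hM : Integrable M) (hN : Integrable N)
    (hM0 : 0 ≤ M) (hN0 : 0 ≤ N) : Integrable fun x => √(M x * N x) := by
  refine ((hM.add hN).div_const 2).mono
    (Real.continuous_sqrt.comp_aestronglyMeasurable
      (hM.aestronglyMeasurable.mul hN.aestronglyMeasurable)) (ae_of_all _ fun x => ?_)
  have hMx : 0 ≤ M x := hM0 x
  have hNx : 0 ≤ N x := hN0 x
  have hmean : 0 ≤ (M x + N x) / 2 := by positivity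
  simp only [Pi.add_apply, Real.norm_of_nonneg (Real.sqrt_nonneg _), Real.norm_of_nonneg hmean]
  -- AM-GM: `M N ≤ ((M + N) / 2)²`.
  exact Real.sqrt_le_iff.2 ⟨hmean, by nlinarith [sq_nonneg (M x - N x)]⟩

lemma integral_sqrt_ite_le_mul {M N : ℝ → ℝ} {c : ℝ} (a : ℝ) (hc : 0 ≤ c) (hM : Integrable M)
    (hN : Integrable N) (hM0 : 0 ≤ M) (hN0 : 0 ≤ N) :
    ∫ x, √((if x ≤ a then c * N x else M x) * N x) =
      √c * (∫ x in Iic a, N x) + ∫ x in Ioi a, √(M x * N x) := by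
  have hleft : EqOn (fun x => √((if x ≤ a then c * N x else M x) * N x)) (fun x => √c * N x)
      (Iic a) := fun x hx => by
    dsimp only
    rw [if_pos (mem_Iic.1 hx), mul_assoc, Real.sqrt_mul hc, Real.sqrt_mul_self (hN0 x)]
  have hright : EqOn (fun x => √((if x ≤ a then c * N x else M x) * N x))
      (fun x => √(M x * N x)) (Ioi a) := fun x hx => by
    dsimp only
    rw [if_neg (not_le.2 (mem_Ioi.1 hx))]
  rw [← intervalIntegral.integral_Iic_add_Ioi
      ((hN.const_mul √c).integrableOn.congr_fun hleft.symm measurableSet_Iic)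
      ((integrable_sqrt_mul hM hN hM0 hN0).integrableOn.congr_fun hright.symm measurableSet_Ioi),
    setIntegral_congr_fun measurableSet_Iic hleft, setIntegral_congr_fun measurableSet_Ioi hright,
    integral_const_mul]

section Normal

variable {X Y : Type*} [Fintype X] [Fintype Y]

lemma hasDerivAt_GP (P : X → ℝ) (hVP : 0 < V P) (x : ℝ) : HasDerivAt (GP P) (NP P x) x := by
  have h := hasDerivAt_stdG_div_sqrt 0 hVP x
  simp only [sub_zero] at h
  exact h

lemma GPQ_eq_stdG (P : X → ℝ) (Q : Y → ℝ) (b x : ℝ) :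
    GPQ P Q b x = stdG ((x - H Q * b) / √(H P / H Q * V Q)) := by
  rw [GPQ, mul_comm, div_eq_mul_inv (x - H Q * b), ← Real.sqrt_inv]
  congr 3
  simp only [div_eq_mul_inv, mul_inv, inv_inv]
  ring

lemma hasDerivAt_GPQ (P : X → ℝ) (Q : Y → ℝ) (b : ℝ) (hv : 0 < H P / H Q * V Q) (x : ℝ) :
    HasDerivAt (GPQ P Q b) (NPQ P Q b x) x := by
  rw [funext (GPQ_eq_stdG P Q b)]
  exact hasDerivAt_stdG_div_sqrt (H Q * b) hv x

lemma integral_Iic_NPQ (P : X → ℝ) (Q : Y → ℝ) (b : ℝ) (hv : 0 < H P / H Q * V Q) (x : ℝ) :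
    ∫ t in Iic x, NPQ P Q b t = GPQ P Q b x := by
  rw [GPQ_eq_stdG]
  exact integral_Iic_normalPDF _ hv x

lemma IPQinf_sub_IPQ (P : X → ℝ) (Q : Y → ℝ) (b : ℝ) (hVP : 0 < V P)
    (hv : 0 < H P / H Q * V Q) (x : ℝ) :
    IPQinf P Q b - IPQ P Q b x = ∫ t in Ioi x, √(NP P t * NPQ P Q b t) := by
  have hint : Integrable fun t => √(NP P t * NPQ P Q b t) :=
    integrable_sqrt_mul (integrable_normalPDF 0 hVP.le) (integrable_normalPDF (H Q * b) hv.le)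
      (normalPDF_nonneg _ _) (normalPDF_nonneg _ _)
  rw [IPQinf, IPQ, ← intervalIntegral.integral_Iic_add_Ioi hint.integrableOn hint.integrableOn,
    add_sub_cancel_left]

end Normal

theorem F1_fidelity_representation_general {X Y : Type*} [Fintype X] [Fintype Y]
    (P : X → ℝ) (Q : Y → ℝ) (hP : IsProb P) (hQ : IsProb Q)
    (hVP : 0 < V P) (hVQ : 0 < V Q) (b : ℝ) (α : ℝ)
    (hα : NP P α / NPQ P Q b α = GP P α / GPQ P Q b α) :
    let A1 : ℝ → ℝ := fun x =>
      if x ≤ α then GP P α / GPQ P Q b α * GPQ P Q b x else GP P x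
    ContDiff ℝ 1 A1 ∧
    Real.sqrt (GP P α * GPQ P Q b α) + IPQinf P Q b - IPQ P Q b α =
      ∫ x : ℝ, Real.sqrt (deriv A1 x * NPQ P Q b x) := by
  intro A1
  have hv : 0 < H P / H Q * V Q := by
    have := hP.H_pos hVP
    have := hQ.H_pos hVQ
    positivity
  have hGPα : 0 < GP P α := stdG_pos _
  have hGPQα : 0 < GPQ P Q b α := stdG_pos _
  set c := GP P α / GPQ P Q b α with hc_def
  have hc : 0 < c := div_pos hGPα hGPQα
  have hglue : c * GPQ P Q b α = GP P α := div_mul_cancel₀ _ hGPQα.ne'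
  have hglue' : c * NPQ P Q b α = NP P α := by
    have hNPQα : NPQ P Q b α ≠ 0 := (normalPDF_pos _ hv α).ne'
    rw [eq_comm, ← div_eq_iff hNPQα]
    exact hα
  have hleft : ∀ y ≤ α, HasDerivAt (fun x => c * GPQ P Q b x) (c * NPQ P Q b y) y :=
    fun y _ => (hasDerivAt_GPQ P Q b hv y).const_mul c
  have hright : ∀ y, α ≤ y → HasDerivAt (GP P) (NP P y) y := fun y _ => hasDerivAt_GP P hVP y
  refine ⟨contDiff_one_ite_le hleft hright (continuous_const.mul (continuous_normalPDF _ _))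
    (continuous_normalPDF _ _) hglue hglue', ?_⟩
  have hsqrt : √c * GPQ P Q b α = √(GP P α * GPQ P Q b α) := by
    rw [hc_def, Real.sqrt_div hGPα.le, Real.sqrt_mul hGPα.le, div_mul_eq_mul_div,
      div_eq_iff (Real.sqrt_pos.2 hGPQα).ne', mul_assoc, Real.mul_self_sqrt hGPQα.le]
  have hderiv (x : ℝ) : deriv A1 x = if x ≤ α then c * NPQ P Q b x else NP P x :=
    (hasDerivAt_ite_le hleft hright hglue hglue' x).deriv
  simp only [hderiv]
  rw [integral_sqrt_ite_le_mul (M := NP P) (N := NPQ P Q b) α hc.le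
      (integrable_normalPDF 0 hVP.le) (integrable_normalPDF _ hv.le) (normalPDF_nonneg _ _)
      (normalPDF_nonneg _ _),
    add_sub_assoc, IPQinf_sub_IPQ P Q b hVP hv, integral_Iic_NPQ P Q b hv, hsqrt]

/-- the function `A_1` is continuously differentiable and
`F_1(b)` equals the fidelity between `dA_1/dx` and `N_{P,Q,b}`. -/
theorem F1_fidelity_representation {X Y : Type*} [Fintype X] [Fintype Y]
    (P : X → ℝ) (Q : Y → ℝ) (hP : IsProb P) (hQ : IsProb Q)
    (hVP : 0 < V P) (hVQ : 0 < V Q)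
    (hratio : H Q / V Q < H P / V P) (b : ℝ) (α : ℝ)
    (hα : NP P α / NPQ P Q b α = GP P α / GPQ P Q b α) :
    let A1 : ℝ → ℝ := fun x =>
      if x ≤ α then GP P α / GPQ P Q b α * GPQ P Q b x else GP P x
    ContDiff ℝ 1 A1 ∧
    Real.sqrt (GP P α * GPQ P Q b α) + IPQinf P Q b - IPQ P Q b α =
      ∫ x : ℝ, Real.sqrt (deriv A1 x * NPQ P Q b x) :=
  F1_fidelity_representation_general P Q hP hQ hVP hVQ b α hα

end RNG
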